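/- arXiv:2403.18320 — 3 statements merged into one kernel-verified Lean document; each statement's English description precedes it below -/
import Mathlib

section
/- Let E be a real inner product space, let F : E → ℝ be continuously differentiable (C¹), and let λ > 0. Suppose (x_k) and (y_k) are sequences in E converging to the same limit w ∈ E, and for each k the point y_k is a global minimizer of the function z ↦ F(z) + (λ/2)‖z − x_k‖². Then the Fréchet derivative of F at w is zero. -/
/-- Limit-point stationarity for an unconstrained proximal minimization step:
if `F` is `C¹`, `x_k → w`, `y_k → w`, and each `y_k` globally minimizes
`z ↦ F z + (λ/2)‖z - x_k‖²`, then `F` has zero derivative at `w`. -/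
theorem prox_limit_point_stationary
    {E : Type*} [NormedAddCommGroup E] [InnerProductSpace ℝ E]
    (F : E → ℝ) (hF : ContDiff ℝ 1 F) (lam : ℝ) (hlam : 0 < lam)
    (x y : ℕ → E) (w : E)
    (hx : Filter.Tendsto x Filter.atTop (nhds w))
    (hy : Filter.Tendsto y Filter.atTop (nhds w))
    (hmin : ∀ k : ℕ, ∀ z : E,
      F (y k) + (lam / 2) * ‖y k - x k‖ ^ 2 ≤ F z + (lam / 2) * ‖z - x k‖ ^ 2) :
    fderiv ℝ F w = 0 := by
  have hFd : ∀ k, fderiv ℝ F (y k) = -(lam • innerSL ℝ (y k - x k)) := by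
    intro k
    have hf : HasFDerivAt F (fderiv ℝ F (y k)) (y k) :=
      (hF.differentiable one_ne_zero (y k)).hasFDerivAt
    have hq : HasFDerivAt (fun z => ‖z - x k‖ ^ 2)
        (2 • (innerSL ℝ (y k - x k)).comp (ContinuousLinearMap.id ℝ E)) (y k) :=
      ((hasFDerivAt_id (y k)).sub_const (x k)).norm_sq
    have hG : HasFDerivAt (fun z => F z + (lam / 2) * ‖z - x k‖ ^ 2)
        (fderiv ℝ F (y k) +
          (lam / 2) • (2 • (innerSL ℝ (y k - x k)).comp (ContinuousLinearMap.id ℝ E)))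
        (y k) := hf.add (hq.const_mul (lam / 2))
    have hloc : IsLocalMin (fun z => F z + (lam / 2) * ‖z - x k‖ ^ 2) (y k) :=
      Filter.Eventually.of_forall (hmin k)
    have h0 := hloc.hasFDerivAt_eq_zero hG
    have hsimp : (lam / 2) • (2 • (innerSL ℝ (y k - x k)).comp (ContinuousLinearMap.id ℝ E))
        = lam • innerSL ℝ (y k - x k) := by
      ext v
      simp [smul_smul]
      ring
    rw [hsimp] at h0
    exact eq_neg_of_add_eq_zero_left h0
  have hnorm : ∀ k, ‖fderiv ℝ F (y k)‖ = lam * ‖y k - x k‖ := by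
    intro k
    rw [hFd k, norm_neg, norm_smul, innerSL_apply_norm, Real.norm_eq_abs, abs_of_pos hlam]
  have h1 : Filter.Tendsto (fun k => fderiv ℝ F (y k)) Filter.atTop (nhds 0) := by
    rw [tendsto_zero_iff_norm_tendsto_zero]
    simp only [hnorm]
    have hsub : Filter.Tendsto (fun k => y k - x k) Filter.atTop (nhds 0) := by
      simpa using hy.sub hx
    have := (tendsto_const_nhds (x := lam) (f := Filter.atTop (α := ℕ))).mul hsub.norm
    simpa using this
  have h2 : Filter.Tendsto (fun k => fderiv ℝ F (y k)) Filter.atTop (nhds (fderiv ℝ F w)) :=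
    ((hF.continuous_fderiv one_ne_zero).continuousAt.tendsto).comp hy
  exact tendsto_nhds_unique h2 h1
end

section
/- Let E₁ and E₂ be finite-dimensional real inner product spaces, let f : E₁ × E₂ → ℝ be continuously differentiable (C¹) and nonnegative, and let λ > 0. Let (x_k, y_k)_{k∈ℕ} be a sequence in E₁ × E₂ such that for each k: x_{k+1} is a global minimizer of x ↦ f(x, y_k) + (λ/2)‖x − x_k‖², and y_{k+1} is a global minimizer of y ↦ f(x_{k+1}, y) + (λ/2)‖y − y_k‖². Then every cluster point (x*, y*) of the sequence (x_k, y_k) is a stationary point of f, i.e., the Fréchet derivative of f at (x*, y*) is zero. -/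
open Filter Topology

lemma quad_hasFDerivAt {E : Type*} [NormedAddCommGroup E] [InnerProductSpace ℝ E]
    (c : ℝ) (a : E) : HasFDerivAt (fun z : E => c * ‖z - a‖ ^ 2) (0 : E →L[ℝ] ℝ) a := by
  have h : HasFDerivAt (fun z : E => z - a) (ContinuousLinearMap.id ℝ E) a :=
    (hasFDerivAt_id a).sub_const a
  have h2 := (h.inner ℝ h).const_mul c
  have hz : (fderivInnerCLM ℝ ((a:E) - a, (a:E) - a)).comp
      ((ContinuousLinearMap.id ℝ E).prod (ContinuousLinearMap.id ℝ E)) = 0 := by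
    ext v
    simp [fderivInnerCLM_apply]
  rw [hz] at h2
  simp only [smul_zero] at h2
  convert h2 using 2 with z
  · rfl
  · rfl
  rw [real_inner_self_eq_norm_sq]

lemma min_of_prox_deriv_zero {E : Type*} [NormedAddCommGroup E] [InnerProductSpace ℝ E]
    (g : E → ℝ) (c : ℝ) (a : E) (D : E →L[ℝ] ℝ) (hg : HasFDerivAt g D a)
    (hmin : ∀ z, g a ≤ g z + c * ‖z - a‖ ^ 2) : D = 0 := by
  set G : E → ℝ := fun z => g z + c * ‖z - a‖ ^ 2 with hG
  have hGd : HasFDerivAt G D a := by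
    have := hg.add (quad_hasFDerivAt c a)
    exact this.congr_fderiv (add_zero D)
  have hloc : IsLocalMin G a := by
    have h : IsMinOn G Set.univ a := by
      intro z _
      simpa [G] using hmin z
    exact h.isLocalMin Filter.univ_mem
  have := hloc.fderiv_eq_zero
  rw [hGd.fderiv] at this
  exact this

lemma tendsto_zero_of_sq_tendsto_zero {E : Type*} [NormedAddCommGroup E]
    {lam : ℝ} (hlam : 0 < lam) (u : ℕ → E)
    (hu : Filter.Tendsto (fun k => (lam / 2) * ‖u k‖ ^ 2) Filter.atTop (nhds 0)) :
    Filter.Tendsto u Filter.atTop (nhds 0) := by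
  rw [tendsto_zero_iff_norm_tendsto_zero]
  have h2 : Filter.Tendsto (fun k => ‖u k‖ ^ 2) Filter.atTop (nhds 0) := by
    have := hu.const_mul (2 / lam)
    simp only [mul_zero] at this
    convert this using 2 with k
    field_simp
  have := h2.sqrt
  simpa [Real.sqrt_sq (norm_nonneg _)] using this

set_option maxHeartbeats 1000000 in
/-- Convergence of two-block proximal alternating minimization: if `f` is `C¹` and
nonnegative, and the blocks are alternately updated by global proximal minimization,
then every cluster point of the iterate sequence is a stationary point of `f`. -/
theorem two_block_prox_alt_min_cluster_point_stationary
    {E₁ E₂ : Type*}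
    [NormedAddCommGroup E₁] [InnerProductSpace ℝ E₁] [FiniteDimensional ℝ E₁]
    [NormedAddCommGroup E₂] [InnerProductSpace ℝ E₂] [FiniteDimensional ℝ E₂]
    (f : E₁ × E₂ → ℝ) (hf : ContDiff ℝ 1 f) (hf0 : ∀ p, 0 ≤ f p)
    (lam : ℝ) (hlam : 0 < lam) (x : ℕ → E₁) (y : ℕ → E₂)
    (hx : ∀ k : ℕ, ∀ z : E₁,
      f (x (k + 1), y k) + (lam / 2) * ‖x (k + 1) - x k‖ ^ 2 ≤
        f (z, y k) + (lam / 2) * ‖z - x k‖ ^ 2)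
    (hy : ∀ k : ℕ, ∀ z : E₂,
      f (x (k + 1), y (k + 1)) + (lam / 2) * ‖y (k + 1) - y k‖ ^ 2 ≤
        f (x (k + 1), z) + (lam / 2) * ‖z - y k‖ ^ 2)
    (xs : E₁) (ys : E₂) (φ : ℕ → ℕ) (hφ : StrictMono φ)
    (hcluster : Filter.Tendsto (fun k : ℕ => (x (φ k), y (φ k)))
      Filter.atTop (nhds (xs, ys))) :
    fderiv ℝ f (xs, ys) = 0 := by
  have hfc : Continuous f := hf.continuous
  have hfd : Differentiable ℝ f := hf.differentiable one_ne_zero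
  set F : ℕ → ℝ := fun k => f (x k, y k) with hF
  have hq1 : ∀ k, 0 ≤ (lam / 2) * ‖x (k + 1) - x k‖ ^ 2 := fun k => by positivity
  have hq2 : ∀ k, 0 ≤ (lam / 2) * ‖y (k + 1) - y k‖ ^ 2 := fun k => by positivity
  have key : ∀ k, F (k + 1) + (lam / 2) * ‖x (k + 1) - x k‖ ^ 2
      + (lam / 2) * ‖y (k + 1) - y k‖ ^ 2 ≤ F k := by
    intro k
    have h1 := hx k (x k)
    have h2 := hy k (y k)
    simp only [sub_self, norm_zero] at h1 h2
    simp only [hF]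
    nlinarith [h1, h2]
  have hanti : Antitone F := antitone_nat_of_succ_le fun k => by
    have := key k; nlinarith [hq1 k, hq2 k]
  have hbdd : BddBelow (Set.range F) := ⟨0, by rintro _ ⟨k, rfl⟩; exact hf0 _⟩
  have hFlim := tendsto_atTop_ciInf hanti hbdd
  have hF1 : Tendsto (fun k => F (k + 1)) atTop (𝓝 (⨅ k, F k)) :=
    hFlim.comp (tendsto_add_atTop_nat 1)
  have hdiff : Tendsto (fun k => F k - F (k + 1)) atTop (𝓝 0) := by
    have := hFlim.sub hF1; simpa using this
  have hsqx : Tendsto (fun k => (lam / 2) * ‖x (k + 1) - x k‖ ^ 2) atTop (𝓝 0) :=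
    squeeze_zero (fun k => hq1 k) (fun k => by have := key k; nlinarith [hq2 k]) hdiff
  have hsqy : Tendsto (fun k => (lam / 2) * ‖y (k + 1) - y k‖ ^ 2) atTop (𝓝 0) :=
    squeeze_zero (fun k => hq2 k) (fun k => by have := key k; nlinarith [hq1 k]) hdiff
  have hnx : Tendsto (fun k => x (k + 1) - x k) atTop (𝓝 0) :=
    tendsto_zero_of_sq_tendsto_zero hlam _ hsqx
  have hny : Tendsto (fun k => y (k + 1) - y k) atTop (𝓝 0) :=
    tendsto_zero_of_sq_tendsto_zero hlam _ hsqy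
  have hφt : Tendsto φ atTop atTop := hφ.tendsto_atTop
  have hxs : Tendsto (fun n => x (φ n)) atTop (𝓝 xs) := by
    have := (continuous_fst.tendsto (xs, ys)).comp hcluster; simpa [Function.comp_def] using this
  have hys : Tendsto (fun n => y (φ n)) atTop (𝓝 ys) := by
    have := (continuous_snd.tendsto (xs, ys)).comp hcluster; simpa [Function.comp_def] using this
  have hx1 : Tendsto (fun n => x (φ n + 1)) atTop (𝓝 xs) := by
    have h := (hnx.comp hφt).add hxs
    simp only [Function.comp] at h
    simpa using h
  have hy1 : Tendsto (fun n => y (φ n + 1)) atTop (𝓝 ys) := by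
    have h := (hny.comp hφt).add hys
    simp only [Function.comp] at h
    simpa using h
  -- limit minimality in x
  have minx : ∀ z, f (xs, ys) ≤ f (z, ys) + (lam / 2) * ‖z - xs‖ ^ 2 := by
    intro z
    have hL : Tendsto (fun n => f (x (φ n + 1), y (φ n))
        + (lam / 2) * ‖x (φ n + 1) - x (φ n)‖ ^ 2) atTop (𝓝 (f (xs, ys))) := by
      have h1 : Tendsto (fun n => f (x (φ n + 1), y (φ n))) atTop (𝓝 (f (xs, ys))) :=
        (hfc.tendsto _).comp (hx1.prodMk_nhds hys)
      have h2 := hsqx.comp hφt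
      simpa using h1.add h2
    have hR : Tendsto (fun n => f (z, y (φ n)) + (lam / 2) * ‖z - x (φ n)‖ ^ 2)
        atTop (𝓝 (f (z, ys) + (lam / 2) * ‖z - xs‖ ^ 2)) := by
      have h1 : Tendsto (fun n => f (z, y (φ n))) atTop (𝓝 (f (z, ys))) :=
        (hfc.tendsto _).comp (tendsto_const_nhds.prodMk_nhds hys)
      have h2 : Tendsto (fun n => (lam / 2) * ‖z - x (φ n)‖ ^ 2) atTop
          (𝓝 ((lam / 2) * ‖z - xs‖ ^ 2)) :=
        Tendsto.const_mul _ (((tendsto_const_nhds.sub hxs).norm).pow 2)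
      exact h1.add h2
    exact le_of_tendsto_of_tendsto' hL hR fun n => hx (φ n) z
  have miny : ∀ z, f (xs, ys) ≤ f (xs, z) + (lam / 2) * ‖z - ys‖ ^ 2 := by
    intro z
    have hL : Tendsto (fun n => f (x (φ n + 1), y (φ n + 1))
        + (lam / 2) * ‖y (φ n + 1) - y (φ n)‖ ^ 2) atTop (𝓝 (f (xs, ys))) := by
      have h1 : Tendsto (fun n => f (x (φ n + 1), y (φ n + 1))) atTop (𝓝 (f (xs, ys))) :=
        (hfc.tendsto _).comp (hx1.prodMk_nhds hy1)
      have h2 := hsqy.comp hφt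
      simpa using h1.add h2
    have hR : Tendsto (fun n => f (x (φ n + 1), z) + (lam / 2) * ‖z - y (φ n)‖ ^ 2)
        atTop (𝓝 (f (xs, z) + (lam / 2) * ‖z - ys‖ ^ 2)) := by
      have h1 : Tendsto (fun n => f (x (φ n + 1), z)) atTop (𝓝 (f (xs, z))) :=
        (hfc.tendsto _).comp (hx1.prodMk_nhds tendsto_const_nhds)
      have h2 : Tendsto (fun n => (lam / 2) * ‖z - y (φ n)‖ ^ 2) atTop
          (𝓝 ((lam / 2) * ‖z - ys‖ ^ 2)) :=
        Tendsto.const_mul _ (((tendsto_const_nhds.sub hys).norm).pow 2)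
      exact h1.add h2
    exact le_of_tendsto_of_tendsto' hL hR fun n => hy (φ n) z
  -- derivative conclusion
  set D := fderiv ℝ f (xs, ys) with hD
  have hfD : HasFDerivAt f D (xs, ys) := (hfd (xs, ys)).hasFDerivAt
  have hg1 : HasFDerivAt (fun z : E₁ => f (z, ys))
      (D.comp (ContinuousLinearMap.inl ℝ E₁ E₂)) xs :=
    hfD.comp xs (hasFDerivAt_prodMk_left xs ys)
  have hg2 : HasFDerivAt (fun z : E₂ => f (xs, z))
      (D.comp (ContinuousLinearMap.inr ℝ E₁ E₂)) ys :=
    hfD.comp ys (hasFDerivAt_prodMk_right xs ys)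
  have hD1 : D.comp (ContinuousLinearMap.inl ℝ E₁ E₂) = 0 :=
    min_of_prox_deriv_zero _ (lam / 2) xs _ hg1 minx
  have hD2 : D.comp (ContinuousLinearMap.inr ℝ E₁ E₂) = 0 :=
    min_of_prox_deriv_zero _ (lam / 2) ys _ hg2 miny
  refine ContinuousLinearMap.ext fun p => ?_
  have h1 : D (p.1, 0) = 0 := by
    have := congrArg (fun L : E₁ →L[ℝ] ℝ => L p.1) hD1
    simpa using this
  have h2 : D ((0 : E₁), p.2) = 0 := by
    have := congrArg (fun L : E₂ →L[ℝ] ℝ => L p.2) hD2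
    simpa using this
  have hp : p = (p.1, (0 : E₂)) + ((0 : E₁), p.2) := by simp
  rw [hp, map_add, h1, h2]
  simp
end

section
/- Let n ≥ r be positive integers and let B ∈ ℂ^{n×r}. Let μ_1, …, μ_r ≥ 0 be the eigenvalues (with multiplicity) of the Hermitian positive semidefinite matrix BᴴB ∈ ℂ^{r×r}. Then for every semi-unitary matrix U ∈ ℂ^{n×r}, Re trace(UᴴB) ≤ ∑_{i=1}^r √μ_i, and there exists a semi-unitary matrix U ∈ ℂ^{n×r} attaining equality. -/
open Matrix

noncomputable def col' {n m : ℕ} (A : Matrix (Fin n) (Fin m) ℂ) (j : Fin m) :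
    EuclideanSpace ℂ (Fin n) := WithLp.toLp 2 (fun i => A i j)

lemma inner_col {n m m' : ℕ} (A : Matrix (Fin n) (Fin m) ℂ) (A' : Matrix (Fin n) (Fin m') ℂ)
    (j : Fin m) (k : Fin m') :
    (inner (𝕜 := ℂ) (col' A j) (col' A' k)) = (Aᴴ * A') j k := by
  simp [col', Matrix.mul_apply, Matrix.conjTranspose_apply, PiLp.inner_apply]
  exact Finset.sum_congr rfl (fun _ _ => mul_comm _ _)

lemma norm_eq_sqrt_of_inner {N : Type*} [Fintype N] (x : EuclideanSpace ℂ N) (c : ℝ)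
    (h : inner (𝕜 := ℂ) x x = (c : ℂ)) : ‖x‖ = Real.sqrt c := by
  have h1 := inner_self_eq_norm_sq (𝕜 := ℂ) x
  rw [h] at h1
  simp only [RCLike.re_to_complex, Complex.ofReal_re] at h1
  rw [show c = ‖x‖^2 from h1, Real.sqrt_sq (norm_nonneg x)]

lemma re_inner_le' {N : Type*} [Fintype N] (x y : EuclideanSpace ℂ N) :
    (inner (𝕜 := ℂ) x y).re ≤ ‖x‖ * ‖y‖ := by
  have := re_inner_le_norm (𝕜 := ℂ) x y
  simpa using this


/-- Trace bound over semi-unitary matrices: for `B ∈ ℂ^{n×r}` with `n ≥ r`, and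
`μ_i ≥ 0` the eigenvalues of `BᴴB`,  `Re trace(UᴴB) ≤ ∑ i √μ_i` for every semi-unitary
`U`, with equality attained by some semi-unitary `U`. -/
theorem re_trace_le_sum_singular_values
    (n r : ℕ) (hr : 0 < r) (hrn : r ≤ n)
    (B : Matrix (Fin n) (Fin r) ℂ)
    (hB : (Bᴴ * B).IsHermitian) :
    (∀ U : Matrix (Fin n) (Fin r) ℂ, Uᴴ * U = 1 →
      (Matrix.trace (Uᴴ * B)).re ≤ ∑ i : Fin r, Real.sqrt (hB.eigenvalues i)) ∧
    (∃ U : Matrix (Fin n) (Fin r) ℂ, Uᴴ * U = 1 ∧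
      (Matrix.trace (Uᴴ * B)).re = ∑ i : Fin r, Real.sqrt (hB.eigenvalues i)) := by
  classical
  have hμ : ∀ i, 0 ≤ hB.eigenvalues i := fun i =>
    Matrix.eigenvalues_conjTranspose_mul_self_nonneg B i
  set μ := hB.eigenvalues with hμdef
  set V : Matrix (Fin r) (Fin r) ℂ := (hB.eigenvectorUnitary : Matrix (Fin r) (Fin r) ℂ)
    with hVdef
  have hVmem : V ∈ Matrix.unitaryGroup (Fin r) ℂ := (hB.eigenvectorUnitary).2
  have hVl : Vᴴ * V = 1 := mem_unitaryGroup_iff'.mp hVmem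
  have hVr : V * Vᴴ = 1 := mem_unitaryGroup_iff.mp hVmem
  set C := B * V with hCdef
  have hC : Cᴴ * C = Matrix.diagonal (fun i => (μ i : ℂ)) := by
    have hs := hB.spectral_theorem
    rw [Unitary.conjStarAlgAut_apply, Matrix.star_eq_conjTranspose, ← hVdef, ← hμdef] at hs
    calc Cᴴ * C = Vᴴ * (Bᴴ * B) * V := by
          rw [hCdef, conjTranspose_mul]; simp only [Matrix.mul_assoc]
      _ = (Vᴴ * V) * diagonal (RCLike.ofReal ∘ μ) * (Vᴴ * V) := by
          rw [hs]; simp only [Matrix.mul_assoc]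
      _ = Matrix.diagonal (fun i => (μ i : ℂ)) := by
          rw [hVl]; simp
  have hCinner : ∀ j k, inner (𝕜 := ℂ) (col' C j) (col' C k)
      = if j = k then (μ j : ℂ) else 0 := by
    intro j k
    rw [inner_col, hC, Matrix.diagonal_apply]
  have hCnorm : ∀ j, ‖col' C j‖ = Real.sqrt (μ j) := by
    intro j
    exact norm_eq_sqrt_of_inner _ _ (by rw [hCinner, if_pos rfl])
  constructor
  · -- bound
    intro U hU
    set W := U * V with hWdef
    have hW : Wᴴ * W = 1 := by
      rw [hWdef, conjTranspose_mul, Matrix.mul_assoc, ← Matrix.mul_assoc Uᴴ, hU,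
        Matrix.one_mul, hVl]
    have hWnorm : ∀ j, ‖col' W j‖ = 1 := by
      intro j
      have h1 : inner (𝕜 := ℂ) (col' W j) (col' W j) = ((1 : ℝ) : ℂ) := by
        rw [inner_col, hW, Matrix.one_apply_eq]; norm_num
      rw [norm_eq_sqrt_of_inner _ _ h1, Real.sqrt_one]
    have htr : Matrix.trace (Wᴴ * C) = Matrix.trace (Uᴴ * B) := by
      rw [hWdef, hCdef, conjTranspose_mul, Matrix.trace_mul_comm,
        Matrix.mul_assoc B V, ← Matrix.mul_assoc V Vᴴ, hVr, Matrix.one_mul,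
        Matrix.trace_mul_comm]
    have htr2 : Matrix.trace (Wᴴ * C) = ∑ j, inner (𝕜 := ℂ) (col' W j) (col' C j) := by
      simp_rw [inner_col]
      simp [Matrix.trace, Matrix.diag]
    rw [← htr, htr2, Complex.re_sum]
    apply Finset.sum_le_sum
    intro j _
    calc (inner (𝕜 := ℂ) (col' W j) (col' C j)).re
        ≤ ‖col' W j‖ * ‖col' C j‖ := re_inner_le' _ _
      _ = Real.sqrt (μ j) := by rw [hWnorm, hCnorm, one_mul]
  · -- equality
    set w : Fin r → EuclideanSpace ℂ (Fin n) :=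
      fun j => (((Real.sqrt (μ j) : ℝ) : ℂ))⁻¹ • col' C j with hwdef
    set v : Fin n → EuclideanSpace ℂ (Fin n) :=
      fun i => if h : (i : ℕ) < r then w ⟨i, h⟩ else 0 with hvdef
    set s' : Set (Fin n) := {i | ∃ h : (i : ℕ) < r, μ ⟨i, h⟩ ≠ 0} with hs'def
    have hwinner : ∀ j k, μ j ≠ 0 → μ k ≠ 0 →
        inner (𝕜 := ℂ) (w j) (w k) = if j = k then (1 : ℂ) else 0 := by
      intro j k hj hk
      simp only [hwdef, inner_smul_left, inner_smul_right, hCinner, map_inv₀,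
        Complex.conj_ofReal]
      by_cases h : j = k
      · subst h
        rw [if_pos rfl, if_pos rfl]
        have hpos : 0 < μ j := lt_of_le_of_ne (hμ j) (Ne.symm hj)
        have hsq : ((μ j : ℝ) : ℂ) = (Real.sqrt (μ j) : ℂ) * (Real.sqrt (μ j) : ℂ) := by
          rw [← Complex.ofReal_mul, Real.mul_self_sqrt (hμ j)]
        have hne : ((Real.sqrt (μ j) : ℝ) : ℂ) ≠ 0 := by
          simpa using (Real.sqrt_pos.mpr hpos).ne'
        field_simp [hsq]
        linear_combination hsq
      · rw [if_neg h, if_neg h]; ring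
    have hvon : Orthonormal ℂ (s'.restrict v) := by
      rw [orthonormal_iff_ite]
      rintro ⟨i, hi⟩ ⟨i', hi'⟩
      obtain ⟨hilt, hiμ⟩ := hi
      obtain ⟨hilt', hiμ'⟩ := hi'
      have hv1 : s'.restrict v ⟨i, ⟨hilt, hiμ⟩⟩ = w ⟨i, hilt⟩ := by
        simp only [Set.restrict_apply, hvdef, dif_pos hilt]
        exact dif_pos hilt
      have hv2 : s'.restrict v ⟨i', ⟨hilt', hiμ'⟩⟩ = w ⟨i', hilt'⟩ := by
        simp only [Set.restrict_apply, hvdef, dif_pos hilt']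
        exact dif_pos hilt'
      rw [hv1, hv2, hwinner _ _ hiμ hiμ']
      simp [Subtype.ext_iff, Fin.ext_iff]
    obtain ⟨b, hb⟩ := hvon.exists_orthonormalBasis_extension_of_card_eq (by simp)
    set u : Fin r → EuclideanSpace ℂ (Fin n) := fun j => b (Fin.castLE hrn j) with hudef
    have hu : Orthonormal ℂ u := b.orthonormal.comp _ (Fin.castLE_injective hrn)
    have huw : ∀ j : Fin r, μ j ≠ 0 → u j = w j := by
      intro j hj
      have hmem : (Fin.castLE hrn j) ∈ s' := by
        refine ⟨by simpa using j.isLt, ?_⟩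
        simpa using hj
      have h1 := hb _ hmem
      rw [hudef]
      simp only [h1, hvdef, dif_pos (show ((Fin.castLE hrn j : Fin n) : ℕ) < r from j.isLt)]
      rfl
    set U0 : Matrix (Fin n) (Fin r) ℂ := Matrix.of (fun i j => u j i) with hU0def
    have hcolU0 : ∀ j, col' U0 j = u j := fun j => rfl
    have hU0unit : U0ᴴ * U0 = 1 := by
      ext j k
      rw [← inner_col, hcolU0, hcolU0, orthonormal_iff_ite.mp hu j k, Matrix.one_apply]
    have hterm : ∀ j, inner (𝕜 := ℂ) (u j) (col' C j) = ((Real.sqrt (μ j) : ℝ) : ℂ) := by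
      intro j
      by_cases hj : μ j = 0
      · have hc0 : col' C j = 0 := by
          refine (inner_self_eq_zero (𝕜 := ℂ)).mp ?_
          rw [hCinner, if_pos rfl, hj]
          norm_num
        rw [hc0, inner_zero_right, hj, Real.sqrt_zero]
        norm_num
      · rw [huw j hj]
        simp only [hwdef, inner_smul_left, hCinner, map_inv₀,
          Complex.conj_ofReal, if_true, eq_self_iff_true]
        have hpos : 0 < μ j := lt_of_le_of_ne (hμ j) (Ne.symm hj)
        have hsq : ((μ j : ℝ) : ℂ) = (Real.sqrt (μ j) : ℂ) * (Real.sqrt (μ j) : ℂ) := by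
          rw [← Complex.ofReal_mul, Real.mul_self_sqrt (hμ j)]
        have hne : ((Real.sqrt (μ j) : ℝ) : ℂ) ≠ 0 := by
          simpa using (Real.sqrt_pos.mpr hpos).ne'
        rw [hsq, inv_mul_cancel_left₀ hne]
    refine ⟨U0 * Vᴴ, ?_, ?_⟩
    · rw [conjTranspose_mul, conjTranspose_conjTranspose, Matrix.mul_assoc,
        ← Matrix.mul_assoc U0ᴴ, hU0unit, Matrix.one_mul, hVr]
    · have htr : Matrix.trace ((U0 * Vᴴ)ᴴ * B) = Matrix.trace (U0ᴴ * C) := by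
        rw [conjTranspose_mul, conjTranspose_conjTranspose, hCdef,
          Matrix.mul_assoc, Matrix.trace_mul_comm, ← Matrix.mul_assoc,
          Matrix.trace_mul_comm]
      have htr2 : Matrix.trace (U0ᴴ * C) = ∑ j, inner (𝕜 := ℂ) (col' U0 j) (col' C j) := by
        simp_rw [inner_col]
        simp [Matrix.trace, Matrix.diag]
      rw [htr, htr2]
      simp_rw [hcolU0, hterm]
      rw [Complex.re_sum]
      simp
end
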